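/- The number of derangements of [n] equals the number of (n+1)-cycles σ in S_{n+1} such that σ(j) ≠ j+1 for all j ∈ [n]. -/

import Mathlib

/-- `σ` consists of a single cycle through all of `Fin n` (an `n`-cycle). -/
def IsFullCycle {n : ℕ} (σ : Equiv.Perm (Fin n)) : Prop :=
  ∀ x y : Fin n, ∃ i : ℕ, (σ ^ i) x = y

/-!
Extend `π ∈ S_n` to `[0, n]` by fixing `n` and compose with the rotation `j ↦ j + 1 (mod n+1)`:
the result `G` satisfies `G n = 0` and `G j = π j + 1` for `j < n`, so `π` is a derangement iff
`G` has no step `j ↦ j + 1`.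

Foata's fundamental transformation writes the cycles of `G`, each starting from its minimum, in
decreasing order of their minima; this is a bijection between permutations and words. In the word,
an ascent `a b` (with `a < b`) between neighbours happens exactly when `G a = b`, and the last
letter is the one sent to the minimum `0`, that is `n`. Closing the word up into a cycle `σ`
therefore gives an `(n+1)`-cycle with `σ j = j + 1` iff `G j = j + 1` for `j < n`, and every
`(n+1)`-cycle arises from exactly one word ending in `n`.
-/

open Function

namespace List

variable {α : Type*}

section FormPerm

variable [DecidableEq α]

lemma formPerm_apply_eq_iff_infix {l : List α} {a b : α} (hl : l.Nodup)
    (ha : a ∈ l) (hlast : l.getLast? ≠ some a) : l.formPerm a = b ↔ [a, b] <:+: l := by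
  obtain ⟨i, hi, rfl⟩ := getElem_of_mem ha
  have hi1 : i + 1 < l.length := by
    by_contra h
    exact hlast (by rw [getLast?_eq_getElem?, getElem?_eq_getElem (by omega)]; congr; omega)
  simp only [formPerm_apply_getElem _ hl, Nat.mod_eq_of_lt hi1, infix_iff_getElem?]
  constructor
  · rintro rfl
    refine ⟨i, by simp; omega, fun j hj => ?_⟩
    simp only [length_cons, length_nil] at hj
    interval_cases j <;> simp [Nat.add_comm]
  · rintro ⟨k, hk, hkl⟩
    have h0 := hkl 0 (by simp)
    have h1 := hkl 1 (by simp)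
    simp only [zero_add] at h0 h1
    obtain ⟨hk0, hk0'⟩ := getElem?_eq_some_iff.mp h0
    rw [(hl.getElem_inj_iff).mp hk0'] at h1
    simpa [Nat.add_comm, getElem?_eq_getElem hi1] using h1

lemma formPerm_pow_succ_apply_getLast {l : List α} (hl : l.Nodup) (hne : l ≠ []) {i : ℕ}
    (hi : i < l.length) : (l.formPerm ^ (i + 1)) (l.getLast hne) = l[i] := by
  simp only [getLast_eq_getElem, formPerm_pow_apply_getElem _ hl]
  congr
  rw [show l.length - 1 + (i + 1) = i + l.length by omega, Nat.add_mod_right, Nat.mod_eq_of_lt hi]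

lemma eq_of_formPerm_eq {l₁ l₂ : List α} (h₁ : l₁.Nodup) (h₂ : l₂.Nodup)
    (hlen : l₁.length = l₂.length) (hlast : l₁.getLast? = l₂.getLast?)
    (h : l₁.formPerm = l₂.formPerm) : l₁ = l₂ := by
  rcases eq_or_ne l₁ [] with rfl | hne₁
  · exact (length_eq_zero_iff.mp hlen.symm).symm
  have hne₂ : l₂ ≠ [] := by rintro rfl; simp at hlen; exact hne₁ hlen
  rw [getLast?_eq_some_getLast hne₁, getLast?_eq_some_getLast hne₂, Option.some_inj] at hlast
  refine ext_getElem hlen fun i hi₁ hi₂ => ?_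
  rw [← formPerm_pow_succ_apply_getLast h₁ hne₁ hi₁, hlast, h,
    formPerm_pow_succ_apply_getLast h₂ hne₂ hi₂]

end FormPerm

variable [LinearOrder α]

def foataBlocks : List α → List (List α)
  | [] => []
  | a :: t => (a :: t.takeWhile (a < ·)) :: foataBlocks (t.dropWhile (a < ·))
  termination_by l => l.length
  decreasing_by
    simp only [length_cons]
    have := (dropWhile_sublist (l := t) (p := fun b => decide (a < b))).length_le
    omega

lemma foataBlocks_cons_append {m : α} {t r : List α} (ht : ∀ y ∈ t, m < y)
    (hr : ∀ z ∈ r.head?, z < m) : foataBlocks (m :: t ++ r) = (m :: t) :: foataBlocks r := by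
  have hr' : r.takeWhile (m < ·) = [] ∧ r.dropWhile (m < ·) = r := by
    cases r with
    | nil => simp
    | cons z r => simp [not_lt.mpr (hr z rfl).le]
  rw [cons_append, foataBlocks, takeWhile_append_of_pos (by simpa using ht),
    dropWhile_append_of_pos (by simpa using ht), hr'.1, hr'.2, append_nil]

end List

namespace Equiv.Perm

variable {α : Type*} (F : Perm α)

noncomputable def orbitList (x : α) : List α :=
  (List.range (minimalPeriod F x)).map fun k => F^[k] x

variable {F}

@[simp] lemma length_orbitList (x : α) : (F.orbitList x).length = minimalPeriod F x := by
  simp [orbitList]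

@[simp] lemma getElem_orbitList (x : α) (i : ℕ) (h : i < (F.orbitList x).length) :
    (F.orbitList x)[i] = F^[i] x := by
  simp [orbitList]

lemma nodup_orbitList (x : α) : (F.orbitList x).Nodup :=
  nodup_periodicOrbit (f := F) (x := x)

lemma formPerm_orbitList_apply [DecidableEq α] {x y : α} (hy : y ∈ F.orbitList x) :
    (F.orbitList x).formPerm y = F y := by
  obtain ⟨i, hi, rfl⟩ := List.getElem_of_mem hy
  rw [List.formPerm_apply_getElem _ (nodup_orbitList x), getElem_orbitList, getElem_orbitList,
    length_orbitList, iterate_mod_minimalPeriod_eq, iterate_succ_apply']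

lemma isChain_orbitList (x : α) : (F.orbitList x).IsChain fun a b => b = F a := by
  rw [List.isChain_iff_getElem]
  intro i h
  simp [iterate_succ_apply']

section Finite

variable [Finite α]

lemma minimalPeriod_pos_of_finite (x : α) : 0 < minimalPeriod F x :=
  minimalPeriod_pos_of_mem_periodicPts (F.injective.mem_periodicPts x)

lemma orbitList_ne_nil (x : α) : F.orbitList x ≠ [] := by
  simpa [← List.length_pos_iff] using minimalPeriod_pos_of_finite x

lemma orbitList_eq_cons (x : α) : F.orbitList x = x :: (F.orbitList x).tail := by
  conv_lhs => rw [← List.cons_head_tail (orbitList_ne_nil x)]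
  simp [List.head_eq_getElem]

lemma head?_flatMap_orbitList (ms : List α) : (ms.flatMap F.orbitList).head? = ms.head? := by
  cases ms with
  | nil => rfl
  | cons m ms => rw [List.flatMap_cons, orbitList_eq_cons]; rfl

lemma mem_orbitList {x y : α} : y ∈ F.orbitList x ↔ F.SameCycle x y := by
  rw [← Cycle.mem_coe_iff, orbitList, ← periodicOrbit_def,
    mem_periodicOrbit_iff (F.injective.mem_periodicPts x)]
  simp only [iterate_eq_pow]
  exact ⟨fun ⟨n, hn⟩ => ⟨n, by simpa using hn⟩, fun h => h.exists_nat_pow_eq⟩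

lemma apply_getLast_orbitList (x : α) :
    F ((F.orbitList x).getLast (orbitList_ne_nil x)) = x := by
  have := minimalPeriod_pos_of_finite (F := F) x
  rw [List.getLast_eq_getElem, getElem_orbitList, length_orbitList, ← iterate_succ_apply' F,
    Nat.succ_eq_add_one, Nat.sub_add_cancel this, iterate_minimalPeriod]

end Finite

section CycleMin

variable [Fintype α] [LinearOrder α] (F : Perm α)

def cycleMin (x : α) : α :=
  (Finset.univ.filter (F.SameCycle x)).min' ⟨x, by simp [SameCycle.refl]⟩

def cycleMins : List α :=
  ((Finset.univ.filter fun m => F.cycleMin m = m).sort (· ≤ ·)).reverse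

noncomputable def foataWord : List α := F.cycleMins.flatMap F.orbitList

variable {F}

lemma cycleMin_le {x y : α} (h : F.SameCycle x y) : F.cycleMin x ≤ y :=
  Finset.min'_le _ _ (by simpa using h)

lemma sameCycle_cycleMin (x : α) : F.SameCycle x (F.cycleMin x) := by
  have := Finset.min'_mem (Finset.univ.filter (F.SameCycle x)) ⟨x, by simp [SameCycle.refl]⟩
  exact (Finset.mem_filter.mp this).2

lemma cycleMin_le_self (x : α) : F.cycleMin x ≤ x := cycleMin_le (SameCycle.refl F x)

lemma cycleMin_eq_of_sameCycle {x y : α} (h : F.SameCycle x y) : F.cycleMin x = F.cycleMin y :=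
  le_antisymm (cycleMin_le (h.trans (sameCycle_cycleMin y)))
    (cycleMin_le (h.symm.trans (sameCycle_cycleMin x)))

lemma cycleMin_cycleMin (x : α) : F.cycleMin (F.cycleMin x) = F.cycleMin x :=
  (cycleMin_eq_of_sameCycle (sameCycle_cycleMin x)).symm

lemma lt_of_mem_tail_orbitList {m y : α} (hm : F.cycleMin m = m)
    (hy : y ∈ (F.orbitList m).tail) : m < y := by
  have hnd := nodup_orbitList (F := F) m
  rw [orbitList_eq_cons, List.nodup_cons] at hnd
  refine lt_of_le_of_ne ?_ fun h => hnd.1 (h ▸ hy)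
  exact hm ▸ cycleMin_le (mem_orbitList.mp (List.mem_of_mem_tail hy))

@[simp] lemma mem_cycleMins {m : α} : m ∈ F.cycleMins ↔ F.cycleMin m = m := by
  simp [cycleMins]

lemma pairwise_cycleMins : F.cycleMins.Pairwise (· > ·) :=
  List.pairwise_reverse.mpr (List.sortedLT_iff_pairwise.mp (Finset.sortedLT_sort _))

lemma mem_foataWord (x : α) : x ∈ F.foataWord :=
  List.mem_flatMap.mpr ⟨F.cycleMin x, mem_cycleMins.mpr (cycleMin_cycleMin x),
    mem_orbitList.mpr (sameCycle_cycleMin x).symm⟩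

lemma nodup_foataWord : F.foataWord.Nodup := by
  refine List.nodup_flatMap.mpr ⟨fun m _ => nodup_orbitList m, ?_⟩
  refine pairwise_cycleMins.nodup.pairwise_of_forall_ne fun a ha b hb hab z hza hzb => hab ?_
  rw [← mem_cycleMins.mp ha, ← mem_cycleMins.mp hb,
    cycleMin_eq_of_sameCycle ((mem_orbitList.mp hza).trans (mem_orbitList.mp hzb).symm)]

end CycleMin

section Foata

variable [Fintype α] [LinearOrder α] {F : Perm α}

lemma foataBlocks_flatMap_orbitList {ms : List α} (hs : ms.Pairwise (· > ·))
    (hm : ∀ m ∈ ms, F.cycleMin m = m) :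
    (ms.flatMap F.orbitList).foataBlocks = ms.map F.orbitList := by
  induction ms with
  | nil => simp [List.foataBlocks]
  | cons m ms ih =>
    rw [List.flatMap_cons, List.map_cons, ← ih hs.of_cons fun x hx => hm x (.tail _ hx),
      orbitList_eq_cons m]
    refine List.foataBlocks_cons_append
      (fun y hy => lt_of_mem_tail_orbitList (hm m (.head _)) hy) fun z hz => ?_
    rw [head?_flatMap_orbitList] at hz
    exact List.rel_of_pairwise_cons hs (List.mem_of_mem_head? hz)

variable (α) in
lemma foataWord_injective : Function.Injective (foataWord : Perm α → List α) := by
  intro F₁ F₂ h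
  have hblocks : F₁.cycleMins.map F₁.orbitList = F₂.cycleMins.map F₂.orbitList := by
    rw [← foataBlocks_flatMap_orbitList pairwise_cycleMins fun _ => mem_cycleMins.mp,
      ← foataBlocks_flatMap_orbitList pairwise_cycleMins fun _ => mem_cycleMins.mp]
    exact congrArg List.foataBlocks h
  ext x
  obtain ⟨m, hm, hx⟩ := List.mem_flatMap.mp (mem_foataWord (F := F₁) x)
  obtain ⟨m', -, hblock⟩ := List.mem_map.mp (hblocks ▸ List.mem_map_of_mem hm)
  rw [← formPerm_orbitList_apply hx, ← hblock, formPerm_orbitList_apply (hblock ▸ hx)]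

lemma isChain_flatMap_orbitList {ms : List α} (hs : ms.Pairwise (· > ·))
    (hm : ∀ m ∈ ms, F.cycleMin m = m) :
    (ms.flatMap F.orbitList).IsChain fun a b => b = F a ∨ b < a := by
  induction ms with
  | nil => simp
  | cons m ms ih =>
    rw [List.flatMap_cons, List.isChain_append]
    refine ⟨(isChain_orbitList m).imp fun _ _ => Or.inl,
      ih hs.of_cons fun x hx => hm x (.tail _ hx), fun x hx y hy => Or.inr ?_⟩
    rw [head?_flatMap_orbitList] at hy
    calc y < m := List.rel_of_pairwise_cons hs (List.mem_of_mem_head? hy)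
      _ = F.cycleMin m := (hm m (.head _)).symm
      _ ≤ x := cycleMin_le (mem_orbitList.mp (List.mem_of_mem_getLast? hx))

lemma infix_foataWord_iff {a b : α} (hab : a < b) : [a, b] <:+: F.foataWord ↔ F a = b := by
  constructor
  · intro h
    have := List.isChain_pair.mp
      ((isChain_flatMap_orbitList pairwise_cycleMins fun _ => mem_cycleMins.mp).infix h)
    exact (this.resolve_right hab.not_gt).symm
  · rintro rfl
    have ha : a ∈ F.orbitList (F.cycleMin a) := mem_orbitList.mpr (sameCycle_cycleMin a).symm
    have hlast : (F.orbitList (F.cycleMin a)).getLast? ≠ some a := by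
      rw [List.getLast?_eq_some_getLast (orbitList_ne_nil _), Ne, Option.some_inj]
      intro h
      have := apply_getLast_orbitList (F := F) (F.cycleMin a)
      rw [h] at this
      exact hab.not_ge (this ▸ cycleMin_le_self a)
    refine ((List.formPerm_apply_eq_iff_infix (nodup_orbitList _) ha hlast).mp
      (formPerm_orbitList_apply ha)).trans ?_
    exact List.infix_flatMap_of_mem (mem_cycleMins.mpr (cycleMin_cycleMin a)) _

lemma getLast?_foataWord_eq_some_iff {x : α} :
    F.foataWord.getLast? = some x ↔ ∀ y, F x ≤ y := by
  set s := Finset.univ.filter fun m => F.cycleMin m = m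
  set m₀ := Finset.univ.min' ⟨x, Finset.mem_univ x⟩
  have hm₀ : ∀ y, m₀ ≤ y := fun y => Finset.min'_le _ _ (Finset.mem_univ y)
  have hs : m₀ ∈ s := by simpa [s] using le_antisymm (cycleMin_le_self m₀) (hm₀ _)
  have hsort : s.sort (· ≤ ·) = m₀ :: (s.erase m₀).sort (· ≤ ·) := by
    conv_lhs => rw [← Finset.insert_erase hs]
    exact Finset.sort_insert _ (fun b _ => hm₀ b) (Finset.notMem_erase _ _)
  -- the last block is the cycle of the least element `m₀`
  have hlast : F.foataWord.getLast? = (F.orbitList m₀).getLast? := by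
    rw [foataWord, List.getLast?_flatMap, cycleMins, List.reverse_reverse, hsort,
      List.findSome?_cons, List.getLast?_eq_some_getLast (orbitList_ne_nil m₀)]
  rw [hlast, List.getLast?_eq_some_getLast (orbitList_ne_nil m₀), Option.some_inj]
  constructor
  · intro h
    rw [← h, apply_getLast_orbitList]
    exact hm₀
  · intro h
    apply F.injective
    rw [apply_getLast_orbitList]
    exact le_antisymm (hm₀ _) (h m₀)

lemma exists_foataWord_eq {w : List α} (hnd : w.Nodup) (hw : ∀ x, x ∈ w) :
    ∃ F : Perm α, F.foataWord = w := by
  have hmem : ∀ l, l ∈ (Finset.univ : Finset α).toList.permutations.toFinset ↔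
      l.Nodup ∧ ∀ x, x ∈ l := by
    intro l
    rw [List.mem_toFinset, List.mem_permutations]
    refine ⟨fun h => ⟨h.nodup_iff.mpr (Finset.nodup_toList _), fun _ => h.mem_iff.mpr ?_⟩,
      fun h => (List.perm_ext_iff_of_nodup h.1 (Finset.nodup_toList _)).mpr fun x => ?_⟩
    · simp
    · simp [h.2 x]
  obtain ⟨F, -, hF⟩ := Finset.surj_on_of_inj_on_of_card_le (s := Finset.univ)
    (fun F _ => F.foataWord) (fun F _ => (hmem _).mpr ⟨nodup_foataWord, mem_foataWord⟩)
    (fun _ _ _ _ h => foataWord_injective α h)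
    (by rw [List.toFinset_card_of_nodup (List.nodup_permutations _ (Finset.nodup_toList _)),
      List.length_permutations, Finset.length_toList, Finset.card_univ, Finset.card_univ,
      Fintype.card_perm])
    w ((hmem w).mpr ⟨hnd, hw⟩)
  exact ⟨F, hF.symm⟩

lemma formPerm_foataWord_apply_eq_iff {a b : α} (hab : a < b)
    (ha : F.foataWord.getLast? ≠ some a) : F.foataWord.formPerm a = b ↔ F a = b :=
  (List.formPerm_apply_eq_iff_infix nodup_foataWord (mem_foataWord a) ha).trans
    (infix_foataWord_iff hab)

end Foata

section ExtendLast

open Fin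

variable {n : ℕ}

def extendLast (π : Perm (Fin n)) : Perm (Fin (n + 1)) :=
  finSuccEquivLast.symm.permCongr (optionCongr π)

@[simp] lemma extendLast_castSucc (π : Perm (Fin n)) (j : Fin n) :
    π.extendLast j.castSucc = (π j).castSucc := by
  simp [extendLast, permCongr_apply]

@[simp] lemma extendLast_last (π : Perm (Fin n)) : π.extendLast (last n) = last n := by
  simp [extendLast, permCongr_apply]

lemma extendLast_injective : Function.Injective (extendLast (n := n)) :=
  fun _ _ h => optionCongr_injective ((permCongr _).injective h)

lemma exists_extendLast_eq {P : Perm (Fin (n + 1))} (hP : P (last n) = last n) :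
    ∃ π : Perm (Fin n), π.extendLast = P := by
  set Q := finSuccEquivLast.permCongr P with hQdef
  have hQ : Q none = none := by simp [Q, permCongr_apply, hP]
  have hQ' : optionCongr (removeNone Q) = Q := by
    ext (_ | x) : 1 <;> simp [hQ]
  refine ⟨removeNone Q, ?_⟩
  rw [extendLast, hQ', hQdef, ← permCongr_symm, symm_apply_apply]

lemma finRotate_mul_extendLast_castSucc (π : Perm (Fin n)) (j : Fin n) :
    (finRotate (n + 1) * π.extendLast) j.castSucc = (π j).succ := by
  rw [mul_apply, extendLast_castSucc]
  exact Fin.ext (coe_finRotate_of_ne_last (castSucc_lt_last _).ne)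

lemma finRotate_mul_extendLast_last (π : Perm (Fin n)) :
    (finRotate (n + 1) * π.extendLast) (last n) = 0 := by
  rw [mul_apply, extendLast_last, finRotate_last]

end ExtendLast

end Equiv.Perm

lemma isFullCycle_formPerm {n : ℕ} {l : List (Fin n)} (hl : l.Nodup) (hmem : ∀ x, x ∈ l) :
    IsFullCycle l.formPerm := by
  intro x y
  obtain ⟨i, hi, rfl⟩ := List.getElem_of_mem (hmem x)
  obtain ⟨j, hj, rfl⟩ := List.getElem_of_mem (hmem y)
  refine ⟨l.length - i + j, ?_⟩
  rw [List.formPerm_pow_apply_getElem _ hl]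
  congr
  rw [show i + (l.length - i + j) = j + l.length by omega, Nat.add_mod_right, Nat.mod_eq_of_lt hj]

lemma IsFullCycle.exists_formPerm_eq {n : ℕ} {σ : Equiv.Perm (Fin n)} (hσ : IsFullCycle σ)
    (x : Fin n) : ∃ l : List (Fin n), l.Nodup ∧ (∀ y, y ∈ l) ∧ l.getLast? = some x ∧
      l.formPerm = σ := by
  have hmem : ∀ y, y ∈ σ.orbitList (σ x) := fun y => by
    obtain ⟨i, hi⟩ := hσ (σ x) y
    exact Equiv.Perm.mem_orbitList.mpr ⟨i, by simpa using hi⟩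
  refine ⟨σ.orbitList (σ x), Equiv.Perm.nodup_orbitList _, hmem, ?_, ?_⟩
  · rw [List.getLast?_eq_some_getLast (Equiv.Perm.orbitList_ne_nil _), Option.some_inj]
    exact σ.injective (Equiv.Perm.apply_getLast_orbitList _)
  · ext y
    rw [Equiv.Perm.formPerm_orbitList_apply (hmem y)]

open Equiv Equiv.Perm Fin

section

variable {n : ℕ}

lemma image_finRotate_mul_extendLast (n : ℕ) :
    (fun π : Perm (Fin n) => finRotate (n + 1) * π.extendLast) '' {π | ∀ x, π x ≠ x} =
      {G | G (last n) = 0 ∧ ∀ j : Fin n, G j.castSucc ≠ j.succ} := by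
  ext G
  constructor
  · rintro ⟨π, hπ, rfl⟩
    refine ⟨finRotate_mul_extendLast_last π, fun j h => hπ j (succ_injective _ ?_)⟩
    rwa [finRotate_mul_extendLast_castSucc] at h
  · rintro ⟨hG, hsucc⟩
    obtain ⟨π, hπ⟩ := exists_extendLast_eq (P := (finRotate (n + 1))⁻¹ * G)
      (by rw [mul_apply, hG, Perm.inv_eq_iff_eq, finRotate_last])
    refine ⟨π, fun j h => hsucc j ?_, by simp [hπ]⟩
    rw [← mul_inv_cancel_left (finRotate (n + 1)) G, ← hπ, finRotate_mul_extendLast_castSucc,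
      h]

lemma getLast?_foataWord_of_apply_last {G : Perm (Fin (n + 1))} (hG : G (last n) = 0) :
    G.foataWord.getLast? = some (last n) :=
  getLast?_foataWord_eq_some_iff.mpr fun y => hG ▸ Fin.zero_le y

lemma formPerm_foataWord_castSucc_eq_succ_iff {G : Perm (Fin (n + 1))} (hG : G (last n) = 0)
    (j : Fin n) : G.foataWord.formPerm j.castSucc = j.succ ↔ G j.castSucc = j.succ :=
  formPerm_foataWord_apply_eq_iff castSucc_lt_succ
    (by rw [getLast?_foataWord_of_apply_last hG, Ne, Option.some_inj]
        exact (castSucc_lt_last j).ne')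

lemma injOn_formPerm_foataWord (n : ℕ) :
    Set.InjOn (fun G : Perm (Fin (n + 1)) => G.foataWord.formPerm) {G | G (last n) = 0} := by
  intro G₁ hG₁ G₂ hG₂ h
  refine foataWord_injective _ (List.eq_of_formPerm_eq nodup_foataWord nodup_foataWord ?_ ?_ h)
  · exact ((List.perm_ext_iff_of_nodup nodup_foataWord nodup_foataWord).mpr
      fun x => by simp [mem_foataWord]).length_eq
  · rw [getLast?_foataWord_of_apply_last hG₁, getLast?_foataWord_of_apply_last hG₂]

lemma image_formPerm_foataWord (n : ℕ) :
    (fun G : Perm (Fin (n + 1)) => G.foataWord.formPerm) ''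
        {G | G (last n) = 0 ∧ ∀ j : Fin n, G j.castSucc ≠ j.succ} =
      {σ | IsFullCycle σ ∧ ∀ j : Fin n, σ j.castSucc ≠ j.succ} := by
  ext σ
  constructor
  · rintro ⟨G, ⟨hG, hsucc⟩, rfl⟩
    exact ⟨isFullCycle_formPerm nodup_foataWord mem_foataWord,
      fun j h => hsucc j ((formPerm_foataWord_castSucc_eq_succ_iff hG j).mp h)⟩
  · rintro ⟨hσ, hsucc⟩
    obtain ⟨l, hnd, hmem, hlast, rfl⟩ := hσ.exists_formPerm_eq (last n)
    obtain ⟨G, rfl⟩ := exists_foataWord_eq hnd hmem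
    have hG : G (last n) = 0 :=
      le_antisymm (getLast?_foataWord_eq_some_iff.mp hlast 0) (zero_le _)
    refine ⟨G, ⟨hG, fun j h => hsucc j ?_⟩, rfl⟩
    exact (formPerm_foataWord_castSucc_eq_succ_iff hG j).mpr h

end

/-- The number of derangements of `[n]` equals the number of `(n+1)`-cycles `σ` in
`S_{n+1}` such that `σ(j) ≠ j+1` for all `j ∈ [n]` (here `j+1` is the genuine successor,
no reduction mod `n+1`; there is no condition at `j = n+1`). -/
theorem stmt14 (n : ℕ) :
    Set.ncard {π : Equiv.Perm (Fin n) | ∀ x : Fin n, π x ≠ x}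
    =
    Set.ncard {σ : Equiv.Perm (Fin (n + 1)) | IsFullCycle σ ∧
        ∀ j : Fin n, σ j.castSucc ≠ j.succ} := by
  rw [← image_formPerm_foataWord,
    ((injOn_formPerm_foataWord n).mono fun _ hG => hG.1).ncard_image,
    ← image_finRotate_mul_extendLast,
    Set.ncard_image_of_injective _ fun _ _ h => extendLast_injective (mul_left_cancel h)]
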